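/- Let d ≥ 3 and let (G,p) be a cs d-framework that is infinitesimally rigid in ℝ^d and whose point set p(V(G)) affinely spans ℝ^d. Then f_1(G) − d·f_0(G) + C(d+1,2) ≥ C(d,2) − d, where f_0(G), f_1(G) are the numbers of vertices and edges of G. -/

import Mathlib

/-!
On symmetric velocity fields `m (ν v) = m v`, a space of dimension `d f₀ / 2`, the constraints of
the edges `e` and `ν e` agree up to sign, so at most `f₁ / 2` of them are independent. A symmetric
trivial motion `v ↦ A p v + b` has `A p v = -A p v = 0`, so it is a translation. Infinitesimal
rigidity thus gives `d f₀ / 2 - d ≤ f₁ / 2`, which is the claim since `C(d+1,2) - C(d,2) = d`.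
-/

open Finset
open scoped Classical

noncomputable section

/-- A finite graph: a finite vertex set together with a finite set of edges,
where each edge is (intended to be) a 2-element subset of the vertex set. -/
structure FinGraph (ι : Type) where
  verts : Finset ι
  edges : Finset (Finset ι)

/-- Every edge is a 2-element subset of the vertex set. -/
def FinGraph.Good {ι : Type} (G : FinGraph ι) : Prop :=
  ∀ e ∈ G.edges, e ⊆ G.verts ∧ e.card = 2

/-- The standard inner (dot) product on `ℝ^d`. -/
def dotR {d : ℕ} (x y : Fin d → ℝ) : ℝ := ∑ i, x i * y i

/-- An infinitesimal motion of the framework `(G, p)`. -/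
def IsMotion {ι : Type} {d : ℕ} (G : FinGraph ι) (p m : ι → Fin d → ℝ) : Prop :=
  ∀ e ∈ G.edges, ∀ u ∈ e, ∀ v ∈ e, dotR (p u - p v) (m u - m v) = 0

/-- The framework `(G, p)` is infinitesimally rigid in `ℝ^d`: every infinitesimal
motion is the restriction of a motion `x ↦ A x + b` of `ℝ^d` with `A` skew-symmetric. -/
def IsInfRigid {ι : Type} (d : ℕ) (G : FinGraph ι) (p : ι → Fin d → ℝ) : Prop :=
  ∀ m : ι → Fin d → ℝ, IsMotion G p m →
    ∃ (A : Matrix (Fin d) (Fin d) ℝ) (b : Fin d → ℝ),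
      A.transpose = -A ∧ ∀ v ∈ G.verts, m v = A.mulVec (p v) + b

/-- A stress on the framework `(G, p)`. -/
def IsStress {ι : Type} {d : ℕ} (G : FinGraph ι) (p : ι → Fin d → ℝ)
    (ω : Finset ι → ℝ) : Prop :=
  ∀ v ∈ G.verts,
    (∑ e ∈ G.edges.filter (fun e => v ∈ e), ∑ u ∈ e.erase v, ω e • (p v - p u)) = 0

/-- A centrally symmetric framework with free involution `ν` satisfying `p (ν v) = -(p v)`. -/
def IsCSFramework {ι : Type} {d : ℕ} (G : FinGraph ι) (p : ι → Fin d → ℝ) (ν : ι → ι) : Prop :=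
  (∀ v ∈ G.verts, ν (ν v) = v) ∧
  (∀ v ∈ G.verts, ν v ∈ G.verts) ∧
  (∀ v ∈ G.verts, ν v ≠ v) ∧
  (∀ e ∈ G.edges, e.image ν ∈ G.edges) ∧
  (∀ e ∈ G.edges, e.image ν ≠ e) ∧
  (∀ v ∈ G.verts, p (ν v) = -(p v))

/-- The convex body spanned by a finite point set. -/
def polyBody {d : ℕ} (V : Finset (Fin d → ℝ)) : Set (Fin d → ℝ) :=
  convexHull ℝ (V : Set (Fin d → ℝ))

/-- `(f, c)` is a supporting functional for `conv V` exposing the face `F`. -/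
def IsSupport {d : ℕ} (V : Finset (Fin d → ℝ)) (f : (Fin d → ℝ) →ₗ[ℝ] ℝ) (c : ℝ)
    (F : Set (Fin d → ℝ)) : Prop :=
  (∀ y ∈ polyBody V, f y ≤ c) ∧ F = {y ∈ polyBody V | f y = c}

/-- A proper face of the polytope `conv V`. -/
def IsProperFace {d : ℕ} (V : Finset (Fin d → ℝ)) (F : Set (Fin d → ℝ)) : Prop :=
  (∃ f c, IsSupport V f c F) ∧ F ≠ polyBody V

/-- A simplicial `d`-polytope in `ℝ^d`, recorded by its vertex set `V`: the polytope is
`conv V`, it is `d`-dimensional, every element of `V` is a vertex, and every proper face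
is a simplex (the convex hull of its affinely independent vertex set). -/
structure SPolytope (d : ℕ) where
  V : Finset (Fin d → ℝ)
  span_top : affineSpan ℝ (V : Set (Fin d → ℝ)) = ⊤
  extreme : ∀ v ∈ V, v ∉ convexHull ℝ ((V.erase v : Finset (Fin d → ℝ)) : Set (Fin d → ℝ))
  simplicial : ∀ F : Set (Fin d → ℝ), IsProperFace V F →
    AffineIndependent ℝ
      (fun x : {y : Fin d → ℝ // y ∈ (V : Set (Fin d → ℝ)) ∩ F} => (x : Fin d → ℝ)) ∧
    F = convexHull ℝ ((V : Set (Fin d → ℝ)) ∩ F)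

/-- `s` is a face of the boundary complex `∂P`. -/
def BFace {d : ℕ} (P : SPolytope d) (s : Finset (Fin d → ℝ)) : Prop :=
  s ⊆ P.V ∧ ∃ F : Set (Fin d → ℝ), IsProperFace P.V F ∧ (s : Set (Fin d → ℝ)) ⊆ F

/-- The number of vertices of `∂P`. -/
def f0 {d : ℕ} (P : SPolytope d) : ℕ := P.V.card

/-- The edges of `∂P`. -/
def edgeFinset {d : ℕ} (P : SPolytope d) : Finset (Finset (Fin d → ℝ)) :=
  P.V.powerset.filter fun e => e.card = 2 ∧ BFace P e

/-- The number of edges of `∂P`. -/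
def f1 {d : ℕ} (P : SPolytope d) : ℕ := (edgeFinset P).card

/-- `g₂(P) = f₁ - d f₀ + C(d+1, 2)`. -/
def g2 {d : ℕ} (P : SPolytope d) : ℤ :=
  (f1 P : ℤ) - (d : ℤ) * (f0 P : ℤ) + ((d + 1).choose 2 : ℤ)

/-- `P` is centrally symmetric. -/
def IsCS {d : ℕ} (P : SPolytope d) : Prop := ∀ v ∈ P.V, -v ∈ P.V

/-- A missing face of `∂P`. -/
def IsMissingFace {d : ℕ} (P : SPolytope d) (σ : Finset (Fin d → ℝ)) : Prop :=
  σ ⊆ P.V ∧ ¬ BFace P σ ∧ ∀ τ ⊂ σ, BFace P τ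

/-- `P` is prime: `∂P` has no missing facet, i.e. no missing face of cardinality `d`. -/
def IsPrimePoly {d : ℕ} (P : SPolytope d) : Prop :=
  ¬ ∃ σ : Finset (Fin d → ℝ), IsMissingFace P σ ∧ σ.card = d

/-- The graph (1-skeleton) of `∂P` as a framework graph. -/
def fullGraph {d : ℕ} (P : SPolytope d) : FinGraph (Fin d → ℝ) :=
  ⟨P.V, edgeFinset P⟩

/-- The graph (1-skeleton) of the star of the face `τ` in `∂P`. -/
def starGraph {d : ℕ} (P : SPolytope d) (τ : Finset (Fin d → ℝ)) : FinGraph (Fin d → ℝ) :=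
  ⟨P.V.filter fun v => BFace P (insert v τ),
   P.V.powerset.filter fun e => e.card = 2 ∧ BFace P (e ∪ τ)⟩

/-- Adjacency in the graph of `∂P`. -/
def Adj {d : ℕ} (P : SPolytope d) (u v : Fin d → ℝ) : Prop :=
  u ≠ v ∧ BFace P {u, v}

/-- `σ` is a face of the link of the face `τ` in `∂P`. -/
def LinkFace {d : ℕ} (P : SPolytope d) (τ σ : Finset (Fin d → ℝ)) : Prop :=
  Disjoint σ τ ∧ BFace P (σ ∪ τ)

/-- `P` is a `d`-dimensional cross-polytope: its vertex set is `{±b₁, …, ±b_d}`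
for some basis `b₁, …, b_d` of `ℝ^d`. -/
def IsCrossPolytope {d : ℕ} (P : SPolytope d) : Prop :=
  ∃ b : Fin d → (Fin d → ℝ), LinearIndependent ℝ b ∧
    (P.V : Set (Fin d → ℝ)) = Set.range b ∪ Set.range (fun i => -(b i))

/-- A facet of `P`: a proper face with `d` vertices. -/
def IsFacet {d : ℕ} (P : SPolytope d) (F : Set (Fin d → ℝ)) : Prop :=
  IsProperFace P.V F ∧ ((P.V : Set (Fin d → ℝ)) ∩ F).ncard = d

/-- `x` lies beyond exactly one facet of `P`: it is strictly separated from `P` by the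
affine hull of one facet `F`, and not separated from `P` by the affine hull of any
other facet. -/
def BeyondExactlyOne {d : ℕ} (P : SPolytope d) (x : Fin d → ℝ) : Prop :=
  ∃ F : Set (Fin d → ℝ), IsFacet P F ∧
    (∀ f c, IsSupport P.V f c F → c < f x) ∧
    (∀ F' : Set (Fin d → ℝ), IsFacet P F' → F' ≠ F →
      ∀ f c, IsSupport P.V f c F' → f x < c)

/-- `P` is obtained from a `d`-dimensional cross-polytope by symmetric stacking: there is
a sequence of cs simplicial `d`-polytopes starting at a cross-polytope and ending at `P`,
each obtained from the previous one as `conv (P_k ∪ {v, -v})` for a point `v` lying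
beyond exactly one facet of `P_k`. -/
def SymmetricStackingFrom {d : ℕ} (P : SPolytope d) : Prop :=
  ∃ (m : ℕ) (Q : Fin (m + 1) → SPolytope d),
    (∀ k, IsCS (Q k)) ∧
    IsCrossPolytope (Q 0) ∧
    Q (Fin.last m) = P ∧
    ∀ k : Fin m, ∃ v : Fin d → ℝ,
      BeyondExactlyOne (Q (Fin.castSucc k)) v ∧
      polyBody (Q (Fin.succ k)).V =
        convexHull ℝ (polyBody (Q (Fin.castSucc k)).V ∪ {v, -v})

/-- `P` is a stacked `d`-polytope: obtained from a `d`-simplex by repeatedly adding a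
point beyond exactly one facet. -/
def IsStacked {d : ℕ} (P : SPolytope d) : Prop :=
  ∃ (m : ℕ) (R : Fin (m + 1) → SPolytope d),
    (R 0).V.card = d + 1 ∧
    R (Fin.last m) = P ∧
    ∀ k : Fin m, ∃ v : Fin d → ℝ,
      BeyondExactlyOne (R (Fin.castSucc k)) v ∧
      polyBody (R (Fin.succ k)).V =
        convexHull ℝ (polyBody (R (Fin.castSucc k)).V ∪ {v})

/-- Every `d` vertices of `P`, no two of which are antipodal, are affinely independent. -/
def GenPos {d : ℕ} (P : SPolytope d) : Prop :=
  ∀ S : Finset (Fin d → ℝ), S ⊆ P.V → S.card = d →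
    (∀ x ∈ S, ∀ y ∈ S, x ≠ -y) →
    AffineIndependent ℝ (fun s : {x : Fin d → ℝ // x ∈ S} => (s : Fin d → ℝ))

/-- The graph of the cone `v₀ * S` over a simplicial complex `S` (a set of finsets):
the vertices of `S` together with `v₀`, and the edges of `S` together with all edges
from `v₀` to vertices of `S`. -/
def coneGraph {d : ℕ} (P : SPolytope d) (v0 : Fin d → ℝ)
    (S : Set (Finset (Fin d → ℝ))) : FinGraph (Fin d → ℝ) :=
  ⟨insert v0 (P.V.filter fun u => ({u} : Finset (Fin d → ℝ)) ∈ S),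
   (P.V.powerset.filter fun e => e.card = 2 ∧ e ∈ S) ∪
     (P.V.filter fun u => ({u} : Finset (Fin d → ℝ)) ∈ S).image
       fun u => ({v0, u} : Finset (Fin d → ℝ))⟩

theorem Finset.exists_transversal_of_free_involution {α : Type*} {s : Finset α} {f : α → α}
    (hmap : ∀ x ∈ s, f x ∈ s) (hinv : ∀ x ∈ s, f (f x) = x) (hfree : ∀ x ∈ s, f x ≠ x) :
    ∃ R ⊆ s, s.card = 2 * R.card ∧ ∀ x ∈ s, (x ∈ R ↔ f x ∉ R) := by
  -- Any linear order picks `x` from each orbit `{x, f x}` with `x < f x`.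
  let _ : LinearOrder α := IsWellOrder.linearOrder WellOrderingRel
  have hlt : ∀ x ∈ s, ¬ x < f x ↔ f x < f (f x) := fun x hx => by
    rw [hinv x hx, not_lt, le_iff_lt_or_eq, or_iff_left (hfree x hx)]
  refine ⟨s.filter (fun x => x < f x), filter_subset _ _, ?_, fun x hx => ?_⟩
  · have hswap : (s.filter (fun x => ¬ x < f x)).card = (s.filter (fun x => x < f x)).card := by
      refine card_nbij' f f ?_ ?_ ?_ ?_ <;> intro x hx <;>
        simp only [mem_coe, mem_filter] at hx ⊢
      · exact ⟨hmap x hx.1, (hlt x hx.1).1 hx.2⟩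
      · exact ⟨hmap x hx.1, by rw [hinv x hx.1]; exact lt_asymm hx.2⟩
      · exact hinv x hx.1
      · exact hinv x hx.1
    rw [← card_filter_add_card_filter_not (fun x => x < f x), hswap, two_mul]
  · simp only [mem_filter, hx, hmap x hx, true_and, ← hlt x hx, not_not]

section Framework

variable {ι : Type} {d : ℕ}

lemma dotR_eq_dotProduct (x y : Fin d → ℝ) : dotR x y = x ⬝ᵥ y := rfl

def symExt (K : Type*) {E : Type*} [Semiring K] [AddCommMonoid E] [Module K E]
    (R : Finset ι) (ν : ι → ι) : (R → E) →ₗ[K] (ι → E) where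
  toFun x v := if h : v ∈ R then x ⟨v, h⟩ else if h' : ν v ∈ R then x ⟨ν v, h'⟩ else 0
  map_add' x y := by funext v; simp only [Pi.add_apply]; split_ifs <;> simp
  map_smul' c x := by funext v; simp only [Pi.smul_apply]; split_ifs <;> simp

section SymExt

variable {K E : Type*} [Semiring K] [AddCommMonoid E] [Module K E] {R s : Finset ι} {ν : ι → ι}

lemma symExt_apply_of_mem (x : R → E) {v : ι} (hv : v ∈ R) :
    symExt K R ν x v = x ⟨v, hv⟩ := dif_pos hv

lemma symExt_apply_involution (hinv : ∀ v ∈ s, ν (ν v) = v)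
    (hR : ∀ v ∈ s, v ∈ R ↔ ν v ∉ R) (x : R → E) {v : ι} (hv : v ∈ s) :
    symExt K R ν x (ν v) = symExt K R ν x v := by
  by_cases h : v ∈ R
  · simp only [symExt, LinearMap.coe_mk, AddHom.coe_mk, dif_neg ((hR v hv).1 h), hinv v hv,
      dif_pos h]
  · have hν : ν v ∈ R := not_not.1 (mt (hR v hv).2 h)
    simp only [symExt, LinearMap.coe_mk, AddHom.coe_mk, dif_pos hν, dif_neg h]

end SymExt

/-- Twice the rigidity-matrix row of a 2-element `e`, summed over ordered pairs of ends so that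
no orientation of `e` has to be chosen. -/
def strainMap (p : ι → Fin d → ℝ) : (ι → Fin d → ℝ) →ₗ[ℝ] (Finset ι → ℝ) where
  toFun m e := ∑ u ∈ e, ∑ v ∈ e, dotR (p u - p v) (m u - m v)
  map_add' m m' := by
    funext e
    simp only [dotR_eq_dotProduct, Pi.add_apply, add_sub_add_comm, dotProduct_add,
      sum_add_distrib]
  map_smul' c m := by
    funext e
    simp only [dotR_eq_dotProduct, Pi.smul_apply, ← smul_sub, dotProduct_smul, smul_eq_mul,
      mul_sum, RingHom.id_apply]

lemma strainMap_pair (p m : ι → Fin d → ℝ) {a b : ι} (hab : a ≠ b) :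
    strainMap p m {a, b} = 2 * dotR (p a - p b) (m a - m b) := by
  have hba : dotR (p b - p a) (m b - m a) = dotR (p a - p b) (m a - m b) := by
    rw [← neg_sub (p a), ← neg_sub (m a), dotR_eq_dotProduct, dotR_eq_dotProduct,
      neg_dotProduct_neg]
  simp only [strainMap, LinearMap.coe_mk, AddHom.coe_mk, sum_pair hab, sub_self, dotR_eq_dotProduct,
    zero_dotProduct] at hba ⊢
  rw [hba]
  ring

lemma isMotion_of_strainMap_eq_zero {G : FinGraph ι} (hG : G.Good) {p m : ι → Fin d → ℝ}
    (h : ∀ e ∈ G.edges, strainMap p m e = 0) : IsMotion G p m := by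
  intro e he
  obtain ⟨a, b, hab, rfl⟩ := card_eq_two.1 (hG e he).2
  have hzero : dotR (p a - p b) (m a - m b) = 0 := by
    simpa [strainMap_pair p m hab] using h _ he
  have hswap : dotR (p b - p a) (m b - m a) = 0 := by
    rw [← neg_sub (p a), ← neg_sub (m a), dotR_eq_dotProduct, neg_dotProduct_neg]
    exact hzero
  simp only [mem_insert, mem_singleton]
  rintro u (rfl | rfl) v (rfl | rfl) <;> simp [hzero, hswap, dotR_eq_dotProduct]

lemma strainMap_image {p m : ι → Fin d → ℝ} {ν : ι → ι} {e : Finset ι} (hinj : Set.InjOn ν e)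
    (hp : ∀ u ∈ e, p (ν u) = -p u) (hm : ∀ u ∈ e, m (ν u) = m u) :
    strainMap p m (e.image ν) = -strainMap p m e := by
  simp only [strainMap, LinearMap.coe_mk, AddHom.coe_mk, sum_image hinj, ← sum_neg_distrib]
  refine sum_congr rfl fun u hu => sum_congr rfl fun v hv => ?_
  rw [hp u hu, hp v hv, hm u hu, hm v hv, neg_sub_neg, ← neg_sub (p u), dotR_eq_dotProduct,
    dotR_eq_dotProduct, neg_dotProduct]

theorem IsInfRigid.card_mul_le {G : FinGraph ι} {p : ι → Fin d → ℝ} {ν : ι → ι}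
    (hG : G.Good) (hinv : ∀ v ∈ G.verts, ν (ν v) = v) (hmap : ∀ v ∈ G.verts, ν v ∈ G.verts)
    (hp : ∀ v ∈ G.verts, p (ν v) = -p v) (hrig : IsInfRigid d G p)
    {R : Finset ι} (hR : R ⊆ G.verts) (hRν : ∀ v ∈ G.verts, v ∈ R ↔ ν v ∉ R)
    {ER : Finset (Finset ι)} (hERν : ∀ e ∈ G.edges, e ∈ ER ↔ e.image ν ∉ ER) :
    R.card * d ≤ ER.card + d := by
  -- The rigidity map on symmetric motions, keeping one edge of each orbit `{e, ν e}`.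
  set Φ := LinearMap.funLeft ℝ ℝ (Subtype.val : ER → Finset ι) ∘ₗ strainMap p ∘ₗ symExt ℝ R ν
  have hker : LinearMap.ker Φ ≤ LinearMap.range (LinearMap.pi fun _ : R => LinearMap.id) := by
    intro x hx
    have hsym : ∀ v ∈ G.verts, symExt ℝ R ν x (ν v) = symExt ℝ R ν x v :=
      fun v hv => symExt_apply_involution hinv hRν x hv
    have hER : ∀ e ∈ ER, strainMap p (symExt ℝ R ν x) e = 0 := fun e he => congrFun hx ⟨e, he⟩
    have hmotion : IsMotion G p (symExt ℝ R ν x) := by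
      refine isMotion_of_strainMap_eq_zero hG fun e he => ?_
      by_cases he' : e ∈ ER
      · exact hER e he'
      · have hsub : ∀ u ∈ e, u ∈ G.verts := fun u hu => (hG e he).1 hu
        have hinj : Set.InjOn ν e := Set.LeftInvOn.injOn fun u hu => hinv u (hsub u hu)
        rw [← neg_eq_zero, ← strainMap_image hinj (fun u hu => hp u (hsub u hu))
          (fun u hu => hsym u (hsub u hu))]
        exact hER _ (not_not.1 (mt (hERν e he).2 he'))
    obtain ⟨A, b, -, hAb⟩ := hrig _ hmotion
    refine ⟨b, funext fun r => ?_⟩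
    have hrV : (r : ι) ∈ G.verts := hR r.2
    have hAr : A.mulVec (p r) = 0 := by
      have h := hsym r hrV
      rw [hAb _ (hmap r hrV), hAb r hrV, hp r hrV, Matrix.mulVec_neg, add_left_inj] at h
      exact neg_eq_self.1 h
    simpa [hAr, symExt_apply_of_mem] using (hAb r hrV).symm
  have hrank : Module.finrank ℝ (LinearMap.range Φ) ≤ ER.card :=
    (Submodule.finrank_le _).trans (by simp)
  have hnull : Module.finrank ℝ (LinearMap.ker Φ) ≤ d :=
    (Submodule.finrank_mono hker).trans ((LinearMap.finrank_range_le _).trans (by simp))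
  have hdim := LinearMap.finrank_range_add_finrank_ker Φ
  simp only [Module.finrank_pi_fintype, Module.finrank_self, Fintype.card_fin,
    mul_one, sum_const, card_univ, Fintype.card_coe, smul_eq_mul] at hdim
  omega

end Framework

theorem stmt2_general {ι : Type} {d : ℕ} (G : FinGraph ι) (p : ι → Fin d → ℝ)
    (ν : ι → ι) (hGood : G.Good) (hcs : IsCSFramework G p ν)
    (hrig : IsInfRigid d G p) :
    (d.choose 2 : ℤ) - (d : ℤ) ≤
      (G.edges.card : ℤ) - (d : ℤ) * (G.verts.card : ℤ) + ((d + 1).choose 2 : ℤ) := by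
  obtain ⟨hinv, hmap, hfree, hemap, hefree, hp⟩ := hcs
  obtain ⟨R, hR, hRcard, hRν⟩ := exists_transversal_of_free_involution hmap hinv hfree
  have heinv : ∀ e ∈ G.edges, (e.image ν).image ν = e := fun e he => by
    rw [image_image]
    exact (image_congr fun x hx => hinv x ((hGood e he).1 hx)).trans image_id
  obtain ⟨ER, -, hERcard, hERν⟩ := exists_transversal_of_free_involution hemap heinv hefree
  have hbound : ((R.card * d : ℕ) : ℤ) ≤ ((ER.card + d : ℕ) : ℤ) :=
    Nat.cast_le.2 (hrig.card_mul_le hGood hinv hmap hp hR hRν hERν)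
  rw [hRcard, hERcard, Nat.choose_succ_succ', Nat.choose_one_right]
  push_cast at hbound ⊢
  linear_combination 2 * hbound

/-- If `d ≥ 3` and `(G, p)` is a cs `d`-framework that is infinitesimally
rigid in `ℝ^d` and affinely spans `ℝ^d`, then `f₁(G) - d f₀(G) + C(d+1,2) ≥ C(d,2) - d`. -/
theorem stmt2 {ι : Type} {d : ℕ} (hd : 3 ≤ d) (G : FinGraph ι) (p : ι → Fin d → ℝ)
    (ν : ι → ι) (hGood : G.Good) (hcs : IsCSFramework G p ν)
    (hrig : IsInfRigid d G p)
    (hspan : affineSpan ℝ (p '' (G.verts : Set ι)) = ⊤) :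
    (d.choose 2 : ℤ) - (d : ℤ) ≤
      (G.edges.card : ℤ) - (d : ℤ) * (G.verts.card : ℤ) + ((d + 1).choose 2 : ℤ) :=
  stmt2_general G p ν hGood hcs hrig
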